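/- Theorem 2 (approximation guarantee of Exact-Greedy): let B > 0 be a budget and let d_1, …, d_{m+1} be distinct candidate datasets such that, writing S_i = {d_1, …, d_i} (with S_0 = ∅), each d_i maximizes the ratio (𝒟(S_{i−1} ∪ {e}) − 𝒟(S_{i−1})) / p(e) over all candidate datasets e ∉ S_{i−1}, each p(d_i) ≤ B, the greedy prefix satisfies ∑_{i=1}^{m} p(d_i) ≤ B, and d_{m+1} is the first dataset whose inclusion exceeds the budget, i.e., ∑_{i=1}^{m+1} p(d_i) > B. Let d_t be a candidate dataset with p(d_t) ≤ B maximizing 𝒟({d}) over all candidate datasets d with p(d) ≤ B. Then for every set S* of candidate datasets with total price at most B, max(𝒟(S_m), 𝒟({d_t})) ≥ ((1 − 1/e)/2) · 𝒟(S*). Hence the greedy algorithm that returns the better of the greedy set S_m and the best affordable single dataset d_t achieves an approximation ratio of (1 − 1/e)/2 for the distinctiveness maximization problem. -/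

import Mathlib

/-!
The distinctiveness `𝒟` is a coverage function, hence monotone and submodular: for any `T`,
`𝒟(S*) ≤ 𝒟(T) + ∑_{e ∈ S*} (𝒟(T ∪ {e}) − 𝒟(T))`. Since the greedy choice `x` has the best
gain-to-price ratio, each summand is at most `p(e)` times the ratio of `x`, so
`p(x) · (𝒟(S*) − 𝒟(T)) ≤ B · (𝒟(T ∪ {x}) − 𝒟(T))`. Along the greedy sequence the gap
`𝒟(S*) − 𝒟(S_i)` therefore shrinks by a factor `1 − p(d_i)/B ≤ exp(−p(d_i)/B)` at every step,
and as the prices of `d_0, …, d_m` sum to more than `B`, `𝒟(S_{m+1}) ≥ (1 − 1/e) 𝒟(S*)`.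
Finally `𝒟(S_{m+1}) ≤ 𝒟(S_m) + 𝒟({d_m}) ≤ 𝒟(S_m) + 𝒟({d_t})` is at most twice the maximum.
-/

/-- The distinctiveness of a finite set `S` of candidate datasets. -/
def distinctiveness {α ι : Type*} [DecidableEq α] (f₀ : Finset α) (f : ι → Finset α)
    (S : Finset ι) : ℕ := (f₀ ∪ S.biUnion f).card

open Finset

section Coverage

variable {α ι : Type*} [DecidableEq α] (f₀ : Finset α) (f : ι → Finset α)

local notation "𝒟" => distinctiveness f₀ f

def marginalGain (T : Finset ι) (e : ι) : ℕ := #(f e \ (f₀ ∪ T.biUnion f))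

theorem distinctiveness_mono {S T : Finset ι} (h : S ⊆ T) : 𝒟 S ≤ 𝒟 T :=
  card_le_card (union_subset_union_right (biUnion_subset_biUnion_of_subset_left f h))

theorem distinctiveness_insert [DecidableEq ι] (T : Finset ι) (e : ι) :
    𝒟 (insert e T) = 𝒟 T + marginalGain f₀ f T e := by
  rw [distinctiveness, biUnion_insert, union_left_comm, ← card_sdiff_add_card, add_comm]
  rfl

theorem marginalGain_eq_zero_of_mem {T : Finset ι} {e : ι} (he : e ∈ T) :
    marginalGain f₀ f T e = 0 :=
  card_eq_zero.2 <| sdiff_eq_empty_iff_subset.2 <|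
    (subset_biUnion_of_mem f he).trans subset_union_right

theorem marginalGain_le_distinctiveness_singleton (T : Finset ι) (e : ι) :
    marginalGain f₀ f T e ≤ 𝒟 {e} := by
  rw [distinctiveness, singleton_biUnion]
  exact card_le_card (sdiff_subset.trans subset_union_right)

theorem distinctiveness_le_add_sum_marginalGain (S T : Finset ι) :
    𝒟 S ≤ 𝒟 T + ∑ e ∈ S, marginalGain f₀ f T e := by
  have hcover : f₀ ∪ S.biUnion f ⊆
      (f₀ ∪ T.biUnion f) ∪ S.biUnion fun e ↦ f e \ (f₀ ∪ T.biUnion f) := by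
    intro a ha
    by_cases haT : a ∈ f₀ ∪ T.biUnion f
    · exact mem_union_left _ haT
    · obtain ⟨e, he, hae⟩ := mem_biUnion.1 ((mem_union.1 ha).resolve_left
        fun h ↦ haT (mem_union_left _ h))
      exact mem_union_right _ (mem_biUnion.2 ⟨e, he, mem_sdiff.2 ⟨hae, haT⟩⟩)
  exact (card_le_card hcover).trans
    ((card_union_le _ _).trans (Nat.add_le_add_left card_biUnion_le _))

theorem price_mul_distinctiveness_sub_le_of_greedy [DecidableEq ι] {p : ι → ℝ} {B : ℝ}
    {S T : Finset ι} {x : ι} (hpx : 0 < p x) (hpS : ∀ e ∈ S, 0 < p e)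
    (hS : ∑ e ∈ S, p e ≤ B)
    (hx : ∀ e ∉ T, ((𝒟 (insert e T) : ℝ) - 𝒟 T) / p e ≤ ((𝒟 (insert x T) : ℝ) - 𝒟 T) / p x) :
    p x * ((𝒟 S : ℝ) - 𝒟 T) ≤ B * ((𝒟 (insert x T) : ℝ) - 𝒟 T) := by
  simp only [distinctiveness_insert, Nat.cast_add, add_sub_cancel_left] at hx ⊢
  have hgain : ∀ e ∈ S, p x * marginalGain f₀ f T e ≤ p e * marginalGain f₀ f T x := by
    intro e he
    by_cases heT : e ∈ T
    · rw [marginalGain_eq_zero_of_mem f₀ f heT, Nat.cast_zero, mul_zero]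
      exact mul_nonneg (hpS e he).le (Nat.cast_nonneg _)
    · have := (div_le_div_iff₀ (hpS e he) hpx).1 (hx e heT)
      linarith
  have hcover : (𝒟 S : ℝ) - 𝒟 T ≤ ∑ e ∈ S, (marginalGain f₀ f T e : ℝ) := by
    have := distinctiveness_le_add_sum_marginalGain f₀ f S T
    rw [sub_le_iff_le_add']
    exact_mod_cast this
  calc p x * ((𝒟 S : ℝ) - 𝒟 T)
      ≤ ∑ e ∈ S, p x * marginalGain f₀ f T e := by
        rw [← mul_sum]; exact mul_le_mul_of_nonneg_left hcover hpx.le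
    _ ≤ ∑ e ∈ S, p e * marginalGain f₀ f T x := sum_le_sum hgain
    _ = (∑ e ∈ S, p e) * marginalGain f₀ f T x := (sum_mul ..).symm
    _ ≤ B * marginalGain f₀ f T x := mul_le_mul_of_nonneg_right hS (Nat.cast_nonneg _)

end Coverage

section Recurrence

variable {g c : ℕ → ℝ} {G B : ℝ}

theorem prod_one_sub_le_exp_neg_sum {κ : Type*} (s : Finset κ) {x : κ → ℝ}
    (hx : ∀ i ∈ s, x i ≤ 1) : ∏ i ∈ s, (1 - x i) ≤ Real.exp (-∑ i ∈ s, x i) := by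
  rw [← sum_neg_distrib, Real.exp_sum]
  refine prod_le_prod (fun i hi ↦ sub_nonneg.2 (hx i hi)) fun i _ ↦ ?_
  linarith [Real.add_one_le_exp (-x i)]

theorem sub_le_mul_prod_of_le_mul_sub (hB : 0 < B) {n : ℕ} (hc : ∀ i < n, c i ≤ B)
    (hstep : ∀ i < n, c i * (G - g i) ≤ B * (g (i + 1) - g i)) :
    G - g n ≤ (G - g 0) * ∏ i ∈ range n, (1 - c i / B) := by
  induction n with
  | zero => simp
  | succ n ih =>
    have hshrink : G - g (n + 1) ≤ (G - g n) * (1 - c n / B) := by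
      have h : (G - g n) * c n / B ≤ g (n + 1) - g n := by
        rw [div_le_iff₀ hB]
        linarith [hstep n n.lt_succ_self]
      rw [mul_one_sub, mul_div_assoc']
      linarith
    have hfactor : 0 ≤ 1 - c n / B := sub_nonneg.2 ((div_le_one hB).2 (hc n n.lt_succ_self))
    calc G - g (n + 1) ≤ (G - g n) * (1 - c n / B) := hshrink
      _ ≤ (G - g 0) * (∏ i ∈ range n, (1 - c i / B)) * (1 - c n / B) :=
        mul_le_mul_of_nonneg_right
          (ih (fun i hi ↦ hc i (hi.trans n.lt_succ_self))
            fun i hi ↦ hstep i (hi.trans n.lt_succ_self)) hfactor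
      _ = (G - g 0) * ∏ i ∈ range (n + 1), (1 - c i / B) := by rw [prod_range_succ, mul_assoc]

theorem sub_le_exp_neg_one_mul_of_le_mul_sub (hB : 0 < B) {n : ℕ} (hc : ∀ i < n, c i ≤ B)
    (hstep : ∀ i < n, c i * (G - g i) ≤ B * (g (i + 1) - g i)) (hg₀ : g 0 ≤ G)
    (hsum : B ≤ ∑ i ∈ range n, c i) :
    G - g n ≤ Real.exp (-1) * (G - g 0) := by
  have hprod : ∏ i ∈ range n, (1 - c i / B) ≤ Real.exp (-1) := by
    refine (prod_one_sub_le_exp_neg_sum _ fun i hi ↦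
      (div_le_one hB).2 (hc i (mem_range.1 hi))).trans (Real.exp_le_exp.2 ?_)
    rw [← sum_div, neg_le_neg_iff, le_div_iff₀ hB, one_mul]
    exact hsum
  calc G - g n ≤ (G - g 0) * ∏ i ∈ range n, (1 - c i / B) :=
        sub_le_mul_prod_of_le_mul_sub hB hc hstep
    _ ≤ (G - g 0) * Real.exp (-1) := mul_le_mul_of_nonneg_left hprod (sub_nonneg.2 hg₀)
    _ = Real.exp (-1) * (G - g 0) := mul_comm _ _

end Recurrence

theorem exact_greedy_approximation_general {α ι : Type*} [DecidableEq α] [DecidableEq ι]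
    (f₀ : Finset α) (f : ι → Finset α) (p : ι → ℝ) (hp : ∀ e, 0 < p e)
    (B : ℝ) (hB : 0 < B) (m : ℕ) (d : ℕ → ι)
    (hgreedy : ∀ i < m + 1, ∀ e : ι, e ∉ (Finset.range i).image d →
      ((distinctiveness f₀ f (insert e ((Finset.range i).image d)) : ℝ) -
          distinctiveness f₀ f ((Finset.range i).image d)) / p e ≤
        ((distinctiveness f₀ f (insert (d i) ((Finset.range i).image d)) : ℝ) -
          distinctiveness f₀ f ((Finset.range i).image d)) / p (d i))
    (hple : ∀ i < m + 1, p (d i) ≤ B)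
    (hover : B < ∑ i ∈ Finset.range (m + 1), p (d i))
    (dt : ι)
    (hbest : ∀ d' : ι, p d' ≤ B →
      distinctiveness f₀ f {d'} ≤ distinctiveness f₀ f {dt})
    (Sstar : Finset ι) (hfeas : ∑ e ∈ Sstar, p e ≤ B) :
    max (distinctiveness f₀ f ((Finset.range m).image d) : ℝ)
        (distinctiveness f₀ f {dt} : ℝ) ≥
      ((1 - 1 / Real.exp 1) / 2) * (distinctiveness f₀ f Sstar : ℝ) := by
  set g : ℕ → ℝ := fun i ↦ distinctiveness f₀ f ((range i).image d)
  have hg_succ : ∀ i, g (i + 1) = distinctiveness f₀ f (insert (d i) ((range i).image d)) := by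
    intro i
    simp only [g, range_add_one, image_insert]
  have hstep :
      ∀ i < m + 1, p (d i) * (distinctiveness f₀ f Sstar - g i) ≤ B * (g (i + 1) - g i) :=
    fun i hi ↦ hg_succ i ▸ price_mul_distinctiveness_sub_le_of_greedy f₀ f (hp _)
      (fun e _ ↦ hp e) hfeas (hgreedy i hi)
  have hg₀ : g 0 ≤ distinctiveness f₀ f Sstar := by
    simp only [g, range_zero, image_empty, Nat.cast_le]
    exact distinctiveness_mono f₀ f (empty_subset _)
  have hgap := sub_le_exp_neg_one_mul_of_le_mul_sub hB hple hstep hg₀ hover.le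
  have hlast : g (m + 1) ≤ g m + distinctiveness f₀ f {dt} := by
    rw [hg_succ, distinctiveness_insert, Nat.cast_add]
    have hgain := (marginalGain_le_distinctiveness_singleton f₀ f ((range m).image d) (d m)).trans
      (hbest _ (hple m m.lt_succ_self))
    exact add_le_add le_rfl (by exact_mod_cast hgain)
  have hsum :
      (1 - Real.exp (-1)) * distinctiveness f₀ f Sstar ≤ g m + distinctiveness f₀ f {dt} := by
    have : 0 ≤ Real.exp (-1) * g 0 := mul_nonneg (Real.exp_pos _).le (Nat.cast_nonneg _)
    linarith
  change max (g m) _ ≥ _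
  rw [one_div, ← Real.exp_neg]
  linarith [le_max_left (g m) (distinctiveness f₀ f {dt} : ℝ),
    le_max_right (g m) (distinctiveness f₀ f {dt} : ℝ)]

/-- Theorem 2 (approximation guarantee of Exact-Greedy): let `d 0, …, d m` be distinct
datasets chosen greedily by cost-effectiveness ratio (with `S_i = {d 0, …, d (i−1)}`),
each of price at most the budget `B`, with the greedy prefix `S_m` affordable
(`∑_{i<m} p(d i) ≤ B`) and `d m` the first dataset whose inclusion exceeds the budget
(`∑_{i<m+1} p(d i) > B`). Let `d_t` be an affordable dataset maximizing the singleton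
distinctiveness over all affordable datasets. Then for every set `S*` of total price at
most `B`, `max(𝒟(S_m), 𝒟({d_t})) ≥ ((1 − 1/e)/2) · 𝒟(S*)`. -/
theorem exact_greedy_approximation {α ι : Type*} [DecidableEq α] [Fintype ι] [DecidableEq ι]
    (f₀ : Finset α) (f : ι → Finset α) (p : ι → ℝ) (hp : ∀ e, 0 < p e)
    (B : ℝ) (hB : 0 < B) (m : ℕ) (d : ℕ → ι) (hinj : Set.InjOn d (Set.Iio (m + 1)))
    (hgreedy : ∀ i < m + 1, ∀ e : ι, e ∉ (Finset.range i).image d →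
      ((distinctiveness f₀ f (insert e ((Finset.range i).image d)) : ℝ) -
          distinctiveness f₀ f ((Finset.range i).image d)) / p e ≤
        ((distinctiveness f₀ f (insert (d i) ((Finset.range i).image d)) : ℝ) -
          distinctiveness f₀ f ((Finset.range i).image d)) / p (d i))
    (hple : ∀ i < m + 1, p (d i) ≤ B)
    (hprefix : ∑ i ∈ Finset.range m, p (d i) ≤ B)
    (hover : B < ∑ i ∈ Finset.range (m + 1), p (d i))
    (dt : ι) (hdt : p dt ≤ B)
    (hbest : ∀ d' : ι, p d' ≤ B →
      distinctiveness f₀ f {d'} ≤ distinctiveness f₀ f {dt})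
    (Sstar : Finset ι) (hfeas : ∑ e ∈ Sstar, p e ≤ B) :
    max (distinctiveness f₀ f ((Finset.range m).image d) : ℝ)
        (distinctiveness f₀ f {dt} : ℝ) ≥
      ((1 - 1 / Real.exp 1) / 2) * (distinctiveness f₀ f Sstar : ℝ) :=
  exact_greedy_approximation_general f₀ f p hp B hB m d hgreedy hple hover dt hbest Sstar hfeas
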